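/- Let E be a finite-dimensional real inner product space, n ≥ 1, and ω₁, …, ωₙ : E → E l-Lipschitz maps whose average ν = (1/n)·Σᵢ ωᵢ is μ-strongly monotone with 0 < μ ≤ l; let z* be the unique root of ν and σ*² = (1/n)·Σᵢ ‖ωᵢ(z*)‖². Fix z₀ ∈ E, K ≥ 1, and 0 < α ≤ μ/(5nl²). Then for EVERY sequence of permutations τ₁, …, τ_K of {1,…,n} (in particular for the incremental proximal point method with identity permutations), the proximal-point-without-replacement output after K epochs satisfies ‖z^{K+1}₀ − z*‖² ≤ 2·e^{−nαμK}·‖z₀ − z*‖² + 3l²σ*²α³n³K/μ. -/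

import Mathlib

open scoped RealInnerProductSpace

set_option maxHeartbeats 1000000

open scoped RealInnerProductSpace

private lemma sum_range_cast (n : ℕ) : ∑ k ∈ Finset.range n, (k : ℝ) = n * (n - 1) / 2 := by
  induction n with
  | zero => simp
  | succ m ih => rw [Finset.sum_range_succ, ih]; push_cast; ring

private lemma sum_range_sq_le (n : ℕ) : ∑ k ∈ Finset.range n, (k : ℝ) ^ 2 ≤ (n : ℝ) ^ 3 / 3 := by
  induction n with
  | zero => simp
  | succ m ih =>
    rw [Finset.sum_range_succ]
    push_cast
    have hm : (0:ℝ) ≤ (m:ℝ) := m.cast_nonneg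
    nlinarith [ih, hm]

private lemma card_filter_lt' (n m : ℕ) (hm : m ≤ n) :
    (Finset.univ.filter (fun j : Fin n => (j : ℕ) < m)).card = m := by
  rw [Finset.card_filter]
  rw [Fin.sum_univ_eq_sum_range (fun j => if j < m then 1 else 0)]
  rw [← Finset.sum_filter]
  have h : Finset.filter (fun a => a < m) (Finset.range n) = Finset.range m := by
    ext a; simp only [Finset.mem_filter, Finset.mem_range]; omega
  rw [h]; simp

private lemma filter_ge_insert' (n : ℕ) (i : ℕ) (hi : i < n) :
    Finset.univ.filter (fun j : Fin n => i ≤ (j : ℕ)) =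
      insert ⟨i, hi⟩ (Finset.univ.filter (fun j : Fin n => i + 1 ≤ (j : ℕ))) := by
  ext j
  simp only [Finset.mem_filter, Finset.mem_univ, true_and, Finset.mem_insert]
  constructor
  · intro h
    rcases eq_or_lt_of_le h with h' | h'
    · left; exact Fin.ext h'.symm
    · right; omega
  · rintro (rfl | h)
    · simp
    · omega

private lemma filter_lt_insert' (n : ℕ) (i : ℕ) (hi : i < n) :
    Finset.univ.filter (fun j : Fin n => (j : ℕ) < i + 1) =
      insert ⟨i, hi⟩ (Finset.univ.filter (fun j : Fin n => (j : ℕ) < i)) := by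
  ext j
  simp only [Finset.mem_filter, Finset.mem_univ, true_and, Finset.mem_insert]
  constructor
  · intro h
    rcases Nat.lt_succ_iff_lt_or_eq.1 h with h' | h'
    · right; exact h'
    · left; exact Fin.ext h'
  · rintro (rfl | h)
    · simp
    · omega

private lemma sum_exchange' (n : ℕ) (G : Fin n → ℝ) :
    ∑ j : Fin n, ∑ k ∈ Finset.univ.filter (fun k : Fin n => (j : ℕ) + 1 ≤ (k : ℕ)), G k
      = ∑ k : Fin n, ((k : ℕ) : ℝ) * G k := by
  simp_rw [Finset.sum_filter]
  rw [Finset.sum_comm]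
  refine Finset.sum_congr rfl (fun k _ => ?_)
  rw [← Finset.sum_filter]
  rw [Finset.sum_const]
  have h2 : (Finset.univ.filter (fun j : Fin n => (j : ℕ) + 1 ≤ (k : ℕ))).card = (k : ℕ) := by
    have := card_filter_lt' n (k : ℕ) k.isLt.le
    convert this using 2
    ext j; simp only [Finset.mem_filter, Finset.mem_univ, true_and]; omega
  rw [h2, nsmul_eq_mul]

private lemma absorb_step (x X Y : ℝ) (hX : 0 ≤ X) (hx0 : 0 ≤ x) (hx : x ≤ 1/5)
    (h : X ≤ Y + x * X) : X ≤ (1 + 2*x) * Y := by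
  have h2 : (1 + 2*x) * X ≤ (1 + 2*x) * (Y + x * X) :=
    mul_le_mul_of_nonneg_left h (by linarith)
  have h3 : 0 ≤ (x * (1 - 2*x)) * X :=
    mul_nonneg (mul_nonneg hx0 (by linarith)) hX
  nlinarith [h2, h3]

private lemma pow_factor_le (n : ℕ) (x : ℝ) (hx0 : 0 ≤ x) (hn : 1 ≤ n)
    (hnx : (n : ℝ) * x ≤ 1/5) : (1 + 2*x) ^ n ≤ 5/3 := by
  have hn1 : (1:ℝ) ≤ (n:ℝ) := by exact_mod_cast hn
  have hx15 : x ≤ 1/5 := by nlinarith [hnx, hn1, hx0]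
  have hbern : (1:ℝ) + (n:ℝ) * (-(2*x)) ≤ (1 + (-(2*x))) ^ n :=
    one_add_mul_le_pow (by linarith) n
  have h1 : (3:ℝ)/5 ≤ (1 - 2*x) ^ n := by
    have e1 : (1:ℝ) + (-(2*x)) = 1 - 2*x := by ring
    rw [e1] at hbern
    nlinarith [hbern, hnx]
  have hprod : (1 + 2*x) ^ n * (1 - 2*x) ^ n ≤ 1 := by
    rw [← mul_pow]
    apply pow_le_one₀ (by nlinarith) (by nlinarith)
  have hpos : (0:ℝ) ≤ (1 + 2*x) ^ n := by positivity
  nlinarith [hprod, h1, hpos]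

private lemma rho_aux (q : ℝ) (hq0 : 0 < q) (hq15 : q ≤ 1/5) :
    (1 + q / 6) ≤ Real.exp (-q) * (1 + 37/24 * q) := by
  have hexp1 : 1 - q ≤ Real.exp (-q) := by
    have := Real.add_one_le_exp (-q)
    linarith
  have h9 : 0 ≤ q * (9 - 37 * q) := mul_nonneg hq0.le (by linarith only [hq15])
  have h1 : (1 + q / 6) ≤ (1 - q) * (1 + 37/24 * q) := by nlinarith [h9]
  have h2 : (1 - q) * (1 + 37/24 * q) ≤ Real.exp (-q) * (1 + 37/24 * q) :=
    mul_le_mul_of_nonneg_right hexp1 (by linarith only [hq0.le])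
  linarith only [h1, h2]

private lemma endgame (α l μ nn dn r T U σ2 A : ℝ)
    (hα : 0 < α) (hμ : 0 < μ) (hμl : μ ≤ l) (hnn : 1 ≤ nn)
    (hdn : 0 ≤ dn) (hr : 0 ≤ r) (hT : 0 ≤ T) (hU : 0 ≤ U) (hσ : 0 ≤ σ2) (hA0 : 0 ≤ A)
    (h5 : α * (nn * l ^ 2) * 5 ≤ μ)
    (hmain : (1 + 2 * (nn * α * μ)) * dn ^ 2 ≤ r ^ 2 + 2 * α * (A * dn))
    (hA : A ≤ α * l * U + α * l ^ 2 * (nn ^ 2 / 2) * ((5/3) * (r + α * T)))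
    (hT2 : T ^ 2 ≤ nn * (nn * σ2))
    (hU2 : U ^ 2 ≤ (nn ^ 3 / 3) * (nn * σ2)) :
    dn ^ 2 ≤ Real.exp (-(nn * α * μ)) * r ^ 2 + 3 * l ^ 2 * σ2 * α ^ 3 * nn ^ 3 / μ := by
  have hl0 : 0 < l := lt_of_lt_of_le hμ hμl
  have hn0 : 0 < nn := lt_of_lt_of_le one_pos hnn
  set q : ℝ := nn * α * μ with hq_def
  have hq0 : 0 < q := by positivity
  have hB15 : nn * α * l ≤ 1/5 := by
    nlinarith [h5, hμl, hl0, mul_pos (mul_pos hn0 hα) hl0]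
  have hq15 : q ≤ 1/5 := by
    rw [hq_def]
    nlinarith [hB15, hμl, mul_pos hn0 hα]
  have hB20 : (0:ℝ) ≤ α ^ 2 * l ^ 2 * nn ^ 2 := by positivity
  have hB2 : α ^ 2 * l ^ 2 * nn ^ 2 ≤ q / 5 := by
    have h1 : (α * nn) * (α * (nn * l ^ 2) * 5) ≤ (α * nn) * μ := by
      apply mul_le_mul_of_nonneg_left h5 (by positivity)
    rw [hq_def]; nlinarith [h1]
  -- split the cross term
  have hcross : 2 * α * (A * dn) ≤ 2 * (α ^ 2 * l * U) * dn
      + (5/3) * (α ^ 2 * l ^ 2 * nn ^ 2) * (r * dn)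
      + (5/3) * (α ^ 2 * l ^ 2 * nn ^ 2) * ((α * T) * dn) := by
    have h1 : 2 * α * dn * A ≤ 2 * α * dn *
        (α * l * U + α * l ^ 2 * (nn ^ 2 / 2) * ((5/3) * (r + α * T))) :=
      mul_le_mul_of_nonneg_left hA (by positivity)
    nlinarith [h1]
  -- Young for the U term
  set X : ℝ := α ^ 2 * l * U with hX_def
  have hX0 : 0 ≤ X := by rw [hX_def]; positivity
  have hyoung : 2 * X * dn ≤ q / 8 * dn ^ 2 + 8 / q * X ^ 2 := by
    rw [← sub_nonneg]
    have e : q / 8 * dn ^ 2 + 8 / q * X ^ 2 - 2 * X * dn = (q * dn - 8 * X) ^ 2 / (8 * q) := by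
      field_simp
      ring
    rw [e]; positivity
  have hXσ : 8 / q * X ^ 2 ≤ (8/3) * (α ^ 3 * nn ^ 3 * l ^ 2 * σ2 / μ) := by
    have h1 : X ^ 2 ≤ α ^ 4 * l ^ 2 * (nn ^ 4 * σ2 / 3) := by
      have he1 : X ^ 2 = (α ^ 2 * l) ^ 2 * U ^ 2 := by rw [hX_def]; ring
      rw [he1]
      have h2 : (α ^ 2 * l) ^ 2 * U ^ 2 ≤ (α ^ 2 * l) ^ 2 * ((nn ^ 3 / 3) * (nn * σ2)) :=
        mul_le_mul_of_nonneg_left hU2 (by positivity)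
      nlinarith [h2]
    have h3 : 8 / q * X ^ 2 ≤ 8 / q * (α ^ 4 * l ^ 2 * (nn ^ 4 * σ2 / 3)) :=
      mul_le_mul_of_nonneg_left h1 (by positivity)
    have h4 : 8 / q * (α ^ 4 * l ^ 2 * (nn ^ 4 * σ2 / 3))
        = (8/3) * (α ^ 3 * nn ^ 3 * l ^ 2 * σ2 / μ) := by
      rw [hq_def]
      field_simp [hμ.ne', hα.ne', hn0.ne']
    linarith only [h3, h4.le, h4.ge]
  -- the r·dn term
  have hrdn : (5/3) * (α ^ 2 * l ^ 2 * nn ^ 2) * (r * dn) ≤ q / 6 * (r ^ 2 + dn ^ 2) := by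
    nlinarith [mul_nonneg hB20 (sq_nonneg (r - dn)),
      mul_le_mul_of_nonneg_right hB2 (by positivity : (0:ℝ) ≤ r ^ 2 + dn ^ 2)]
  -- the T·dn term
  have hTdn : (5/3) * (α ^ 2 * l ^ 2 * nn ^ 2) * ((α * T) * dn)
      ≤ q / 6 * dn ^ 2 + (5/6) * (α ^ 2 * l ^ 2 * nn ^ 2) * (α * T) ^ 2 := by
    nlinarith [mul_nonneg hB20 (sq_nonneg (α * T - dn)),
      mul_le_mul_of_nonneg_right hB2 (sq_nonneg dn)]
  have hTσ : (5/6) * (α ^ 2 * l ^ 2 * nn ^ 2) * (α * T) ^ 2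
      ≤ (1/6) * (α ^ 3 * nn ^ 3 * l ^ 2 * σ2 / μ) := by
    have h1 : (α * T) ^ 2 ≤ α ^ 2 * (nn ^ 2 * σ2) := by nlinarith [hT2, sq_nonneg α]
    have h2 : (5/6) * (α ^ 2 * l ^ 2 * nn ^ 2) * (α * T) ^ 2
        ≤ (5/6) * (q / 5) * (α ^ 2 * (nn ^ 2 * σ2)) := by
      apply mul_le_mul (by nlinarith [hB2]) h1 (by positivity) (by positivity)
    have h3 : (5/6) * (q / 5) * (α ^ 2 * (nn ^ 2 * σ2)) = (1/6) * (α ^ 3 * nn ^ 3 * μ * σ2) := by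
      rw [hq_def]; ring
    have hc0 : (0:ℝ) ≤ α ^ 3 * nn ^ 3 * σ2 :=
      mul_nonneg (mul_nonneg (pow_nonneg hα.le 3) (pow_nonneg hn0.le 3)) hσ
    have hμμ : μ ^ 2 ≤ l ^ 2 := pow_le_pow_left₀ hμ.le hμl 2
    have h4 : α ^ 3 * nn ^ 3 * μ * σ2 ≤ α ^ 3 * nn ^ 3 * l ^ 2 * σ2 / μ := by
      rw [le_div_iff₀ hμ]
      linarith only [mul_le_mul_of_nonneg_left hμμ hc0]
    linarith only [h2, h3.le, h3.ge, h4]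
  -- collect
  set Cσ : ℝ := α ^ 3 * nn ^ 3 * l ^ 2 * σ2 / μ with hC_def
  have hC0 : 0 ≤ Cσ := by rw [hC_def]; positivity
  have hcollect : (1 + 37/24 * q) * dn ^ 2 ≤ (1 + q / 6) * r ^ 2 + (17/6) * Cσ := by
    linarith only [hmain, hcross, hyoung, hXσ, hrdn, hTdn, hTσ]
  have hrho : (1 + q / 6) ≤ Real.exp (-q) * (1 + 37/24 * q) := rho_aux q hq0 hq15
  have hstep : (1 + 37/24 * q) * dn ^ 2
      ≤ (1 + 37/24 * q) * (Real.exp (-q) * r ^ 2) + (17/6) * Cσ := by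
    have h1 : (1 + q / 6) * r ^ 2 ≤ Real.exp (-q) * (1 + 37/24 * q) * r ^ 2 :=
      mul_le_mul_of_nonneg_right hrho (by positivity)
    linarith only [hcollect, h1]
  have hfin : dn ^ 2 ≤ Real.exp (-q) * r ^ 2 + (17/6) * Cσ := by
    rcases le_or_gt (dn ^ 2) (Real.exp (-q) * r ^ 2) with hc | hc
    · linarith only [hc, hC0]
    · have h1 : 0 ≤ (37/24 * q) * (dn ^ 2 - Real.exp (-q) * r ^ 2) :=
        mul_nonneg (by linarith only [hq0.le]) (by linarith only [hc])
      linarith only [hstep, h1]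
  have hlast : (17/6) * Cσ ≤ 3 * l ^ 2 * σ2 * α ^ 3 * nn ^ 3 / μ := by
    have he : 3 * l ^ 2 * σ2 * α ^ 3 * nn ^ 3 / μ = 3 * Cσ := by rw [hC_def]; ring
    rw [he]
    linarith only [hC0]
  linarith only [hfin, hlast]

private lemma epoch {E : Type*} [NormedAddCommGroup E] [InnerProductSpace ℝ E]
    (n : ℕ) (hn : 1 ≤ n) (ω : Fin n → E → E) (l μ : ℝ) (hμ : 0 < μ) (hμl : μ ≤ l)
    (hlip : ∀ (i : Fin n) (z₁ z₂ : E), ‖ω i z₁ - ω i z₂‖ ≤ l * ‖z₁ - z₂‖)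
    (ν : E → E) (hν : ∀ z, ν z = (n : ℝ)⁻¹ • ∑ i, ω i z)
    (hmono : ∀ z₁ z₂, ⟪ν z₁ - ν z₂, z₁ - z₂⟫ ≥ μ * ‖z₁ - z₂‖ ^ 2)
    (zs : E) (hzs : ν zs = 0)
    (σ2 : ℝ) (hσ2 : σ2 = (n : ℝ)⁻¹ * ∑ i, ‖ω i zs‖ ^ 2)
    (α : ℝ) (hα0 : 0 < α) (hα5 : α * ((n : ℝ) * l ^ 2) * 5 ≤ μ)
    (τ : Equiv.Perm (Fin n)) (w : ℕ → E)
    (hw : ∀ i (hi : i < n), w (i + 1) = w i - α • ω (τ ⟨i, hi⟩) (w (i + 1))) :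
    ‖w n - zs‖ ^ 2 ≤ Real.exp (-((n : ℝ) * α * μ)) * ‖w 0 - zs‖ ^ 2
      + 3 * l ^ 2 * σ2 * α ^ 3 * (n : ℝ) ^ 3 / μ := by
  have hl0 : 0 < l := lt_of_lt_of_le hμ hμl
  have hn0 : (0 : ℝ) < n := by exact_mod_cast Nat.lt_of_lt_of_le Nat.zero_lt_one hn
  have hn1 : (1 : ℝ) ≤ n := by exact_mod_cast hn
  set gv : Fin n → E := fun j => ω (τ j) (w ((j : ℕ) + 1)) with hgv_def
  set G : Fin n → ℝ := fun j => ‖ω (τ j) zs‖ with hG_def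
  have hG0 : ∀ j, 0 ≤ G j := fun j => norm_nonneg _
  set T : ℝ := ∑ j : Fin n, G j with hT_def
  set U : ℝ := ∑ k : Fin n, ((k : ℕ) : ℝ) * G k with hU_def
  have hT0 : 0 ≤ T := Finset.sum_nonneg fun j _ => hG0 j
  have hU0 : 0 ≤ U := Finset.sum_nonneg fun j _ =>
    mul_nonneg (Nat.cast_nonneg _) (hG0 j)
  clear_value T U
  have hαl0 : 0 < α * l := by positivity
  have hαl : α * l ≤ 1 / 5 := by
    nlinarith [hα5, hμl, hl0,
      mul_nonneg (mul_nonneg (sub_nonneg.2 hn1) hαl0.le) hl0.le]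
  -- basic step facts
  have hw' : ∀ j : Fin n, w ((j : ℕ) + 1) = w (j : ℕ) - α • gv j := by
    intro j
    have h := hw (j : ℕ) j.isLt
    simpa [hgv_def] using h
  have hgnorm : ∀ j : Fin n, ‖gv j‖ ≤ G j + l * ‖w ((j : ℕ) + 1) - zs‖ := by
    intro j
    have h1 : ‖gv j - ω (τ j) zs‖ ≤ l * ‖w ((j : ℕ) + 1) - zs‖ := hlip (τ j) _ _
    have h2 : gv j = (gv j - ω (τ j) zs) + ω (τ j) zs := by abel
    calc ‖gv j‖ = ‖(gv j - ω (τ j) zs) + ω (τ j) zs‖ := by rw [← h2]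
      _ ≤ ‖gv j - ω (τ j) zs‖ + ‖ω (τ j) zs‖ := norm_add_le _ _
      _ ≤ l * ‖w ((j : ℕ) + 1) - zs‖ + G j := by
          exact add_le_add h1 le_rfl
      _ = G j + l * ‖w ((j : ℕ) + 1) - zs‖ := by ring
  have hdrec : ∀ j : Fin n, ‖w ((j : ℕ) + 1) - zs‖ ≤
      (‖w (j : ℕ) - zs‖ + α * G j) + (α * l) * ‖w ((j : ℕ) + 1) - zs‖ := by
    intro j
    have h1 : w ((j : ℕ) + 1) - zs = (w (j : ℕ) - zs) - α • gv j := by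
      rw [hw' j]; abel
    have h2 : ‖w ((j : ℕ) + 1) - zs‖ ≤ ‖w (j : ℕ) - zs‖ + α * ‖gv j‖ := by
      calc ‖w ((j : ℕ) + 1) - zs‖ = ‖(w (j : ℕ) - zs) - α • gv j‖ := by rw [h1]
        _ ≤ ‖w (j : ℕ) - zs‖ + ‖α • gv j‖ := norm_sub_le _ _
        _ = ‖w (j : ℕ) - zs‖ + α * ‖gv j‖ := by
            rw [norm_smul, Real.norm_eq_abs, abs_of_pos hα0]
    have h3 := hgnorm j
    nlinarith [h2, h3, hα0]
  -- uniform bound on distances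
  have hTp : ∀ i, i ≤ n → ‖w i - zs‖ ≤ (1 + 2 * (α * l)) ^ i *
      (‖w 0 - zs‖ + α * ∑ j ∈ Finset.univ.filter (fun j : Fin n => (j : ℕ) < i), G j) := by
    intro i hi
    induction i with
    | zero => simp
    | succ m ih =>
      have hm : m < n := hi
      have ihm := ih (Nat.le_of_lt hm)
      set Tm := ∑ j ∈ Finset.univ.filter (fun j : Fin n => (j : ℕ) < m), G j with hTm
      have hTm0 : 0 ≤ Tm := Finset.sum_nonneg fun j _ => hG0 j
      have hsucc : ∑ j ∈ Finset.univ.filter (fun j : Fin n => (j : ℕ) < m + 1), G j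
          = Tm + G ⟨m, hm⟩ := by
        rw [filter_lt_insert' n m hm, Finset.sum_insert (by simp)]
        ring
      rw [hsucc]
      have hj := hdrec ⟨m, hm⟩
      simp only [Fin.val_mk] at hj
      have hstep2 : ‖w (m + 1) - zs‖ ≤ (1 + 2 * (α * l)) * (‖w m - zs‖ + α * G ⟨m, hm⟩) :=
        absorb_step (α * l) _ _ (norm_nonneg _) hαl0.le hαl hj
      have hpow1 : (1 : ℝ) ≤ 1 + 2 * (α * l) := by linarith only [hαl0]
      have hpowm : (1 + 2 * (α * l)) ≤ (1 + 2 * (α * l)) ^ (m + 1) :=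
        le_self_pow₀ hpow1 (Nat.succ_ne_zero m)
      have hG0m : 0 ≤ α * G ⟨m, hm⟩ := mul_nonneg hα0.le (hG0 _)
      calc ‖w (m + 1) - zs‖ ≤ (1 + 2 * (α * l)) * (‖w m - zs‖ + α * G ⟨m, hm⟩) := hstep2
        _ ≤ (1 + 2 * (α * l)) * ((1 + 2 * (α * l)) ^ m * (‖w 0 - zs‖ + α * Tm) + α * G ⟨m, hm⟩) := by
            apply mul_le_mul_of_nonneg_left _ (by linarith only [hpow1])
            exact add_le_add ihm le_rfl
        _ = (1 + 2 * (α * l)) ^ (m + 1) * (‖w 0 - zs‖ + α * Tm)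
            + (1 + 2 * (α * l)) * (α * G ⟨m, hm⟩) := by ring
        _ ≤ (1 + 2 * (α * l)) ^ (m + 1) * (‖w 0 - zs‖ + α * Tm)
            + (1 + 2 * (α * l)) ^ (m + 1) * (α * G ⟨m, hm⟩) := by
            have := mul_le_mul_of_nonneg_right hpowm hG0m
            linarith only [this]
        _ = (1 + 2 * (α * l)) ^ (m + 1) * (‖w 0 - zs‖ + α * (Tm + G ⟨m, hm⟩)) := by ring
  have hnαl : (n : ℝ) * (α * l) ≤ 1 / 5 := by
    nlinarith [hα5, hμl, hl0, mul_pos (mul_pos hn0 hα0) hl0]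
  have hpown : (1 + 2 * (α * l)) ^ n ≤ 5 / 3 := pow_factor_le n (α * l) hαl0.le hn hnαl
  have hD : ∀ i, i ≤ n → ‖w i - zs‖ ≤ (5 / 3) * (‖w 0 - zs‖ + α * T) := by
    intro i hi
    have h1 := hTp i hi
    have hsub : ∑ j ∈ Finset.univ.filter (fun j : Fin n => (j : ℕ) < i), G j ≤ T := by
      rw [hT_def]
      apply Finset.sum_le_sum_of_subset_of_nonneg (Finset.filter_subset _ _)
      intro j _ _; exact hG0 j
    have hsubnn : 0 ≤ ∑ j ∈ Finset.univ.filter (fun j : Fin n => (j : ℕ) < i), G j :=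
      Finset.sum_nonneg fun j _ => hG0 j
    have hpow1 : (1 : ℝ) ≤ 1 + 2 * (α * l) := by linarith only [hαl0]
    have hpi : (1 + 2 * (α * l)) ^ i ≤ 5 / 3 :=
      le_trans (pow_le_pow_right₀ hpow1 hi) hpown
    calc ‖w i - zs‖ ≤ (1 + 2 * (α * l)) ^ i *
        (‖w 0 - zs‖ + α * ∑ j ∈ Finset.univ.filter (fun j : Fin n => (j : ℕ) < i), G j) := h1
      _ ≤ (5 / 3) * (‖w 0 - zs‖ + α * T) := by
          apply mul_le_mul hpi _ _ (by norm_num)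
          · have : α * ∑ j ∈ Finset.univ.filter (fun j : Fin n => (j : ℕ) < i), G j ≤ α * T :=
              mul_le_mul_of_nonneg_left hsub hα0.le
            linarith only [this]
          · positivity
  -- telescoping
  have htele : ∀ m, m ≤ n → w (n - m) = w n +
      α • ∑ j ∈ Finset.univ.filter (fun j : Fin n => n - m ≤ (j : ℕ)), gv j := by
    intro m hm
    induction m with
    | zero =>
      have hF : Finset.univ.filter (fun j : Fin n => n - 0 ≤ (j : ℕ)) = (∅ : Finset (Fin n)) := by
        ext j
        simp only [Finset.mem_filter, Finset.mem_univ, true_and, Finset.notMem_empty,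
          iff_false]
        omega
      rw [hF]
      simp
    | succ m ih =>
      have hm' : m ≤ n := Nat.le_of_succ_le hm
      have ihm := ih hm'
      have hi : n - (m + 1) < n := by omega
      have hni : n - m = (n - (m + 1)) + 1 := by omega
      set i := n - (m + 1) with hidef
      have hwi : w i = w (i + 1) + α • gv ⟨i, hi⟩ := by
        have := hw' ⟨i, hi⟩
        simp only [Fin.val_mk] at this
        rw [this]; abel
      have hFins : Finset.univ.filter (fun j : Fin n => i ≤ (j : ℕ)) =
          insert ⟨i, hi⟩ (Finset.univ.filter (fun j : Fin n => i + 1 ≤ (j : ℕ))) :=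
        filter_ge_insert' n i hi
      have hnm : ¬ ((⟨i, hi⟩ : Fin n) ∈
          Finset.univ.filter (fun j : Fin n => i + 1 ≤ (j : ℕ))) := by
        simp
      rw [hFins, Finset.sum_insert hnm, smul_add]
      rw [hni] at ihm
      rw [hwi, ihm]
      abel
  have htele' : ∀ i, i ≤ n → w i = w n +
      α • ∑ j ∈ Finset.univ.filter (fun j : Fin n => i ≤ (j : ℕ)), gv j := by
    intro i hi
    have := htele (n - i) (by omega)
    rwa [show n - (n - i) = i by omega] at this
  -- cardinality of tail filters
  have hcard : ∀ i, i ≤ n →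
      ((Finset.univ.filter (fun j : Fin n => i ≤ (j : ℕ))).card : ℝ) ≤ (n : ℝ) - i := by
    intro i hi
    have h1 : (Finset.univ.filter (fun j : Fin n => i ≤ (j : ℕ))).card
        + (Finset.univ.filter (fun j : Fin n => (j : ℕ) < i)).card = n := by
      have := Finset.card_filter_add_card_filter_not
        (s := (Finset.univ : Finset (Fin n))) (p := fun j : Fin n => i ≤ (j : ℕ))
      rw [Finset.card_univ, Fintype.card_fin] at this
      have he : Finset.univ.filter (fun j : Fin n => ¬ (i ≤ (j : ℕ))) =
          Finset.univ.filter (fun j : Fin n => (j : ℕ) < i) := by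
        apply Finset.filter_congr
        intro j _
        simp [not_le]
      rw [he] at this
      exact this
    have h2 := card_filter_lt' n i hi
    have h3 : (Finset.univ.filter (fun j : Fin n => i ≤ (j : ℕ))).card = n - i := by omega
    rw [h3]
    rw [Nat.cast_sub hi]
  -- distance from w i to w n
  have hdelta : ∀ i, i ≤ n → ‖w i - w n‖ ≤
      α * ((∑ j ∈ Finset.univ.filter (fun j : Fin n => i ≤ (j : ℕ)), G j)
        + ((n : ℝ) - i) * (l * ((5 / 3) * (‖w 0 - zs‖ + α * T)))) := by
    intro i hi
    have h0 : w i - w n = α • ∑ j ∈ Finset.univ.filter (fun j : Fin n => i ≤ (j : ℕ)), gv j := by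
      rw [htele' i hi]; abel
    have hlD0 : 0 ≤ l * ((5 / 3) * (‖w 0 - zs‖ + α * T)) := by positivity
    have h1 : ‖w i - w n‖ = α * ‖∑ j ∈ Finset.univ.filter (fun j : Fin n => i ≤ (j : ℕ)), gv j‖ := by
      rw [h0, norm_smul, Real.norm_eq_abs, abs_of_pos hα0]
    have h2 : ‖∑ j ∈ Finset.univ.filter (fun j : Fin n => i ≤ (j : ℕ)), gv j‖
        ≤ ∑ j ∈ Finset.univ.filter (fun j : Fin n => i ≤ (j : ℕ)), ‖gv j‖ :=
      norm_sum_le _ _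
    have h3 : ∑ j ∈ Finset.univ.filter (fun j : Fin n => i ≤ (j : ℕ)), ‖gv j‖
        ≤ ∑ j ∈ Finset.univ.filter (fun j : Fin n => i ≤ (j : ℕ)),
            (G j + l * ((5 / 3) * (‖w 0 - zs‖ + α * T))) := by
      apply Finset.sum_le_sum
      intro j _
      have := hgnorm j
      have hDj : ‖w ((j : ℕ) + 1) - zs‖ ≤ (5 / 3) * (‖w 0 - zs‖ + α * T) :=
        hD ((j : ℕ) + 1) j.isLt
      have hl' : l * ‖w ((j : ℕ) + 1) - zs‖ ≤ l * ((5 / 3) * (‖w 0 - zs‖ + α * T)) :=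
        mul_le_mul_of_nonneg_left hDj hl0.le
      linarith only [this, hl']
    have h4 : ∑ j ∈ Finset.univ.filter (fun j : Fin n => i ≤ (j : ℕ)),
          (G j + l * ((5 / 3) * (‖w 0 - zs‖ + α * T)))
        = (∑ j ∈ Finset.univ.filter (fun j : Fin n => i ≤ (j : ℕ)), G j)
          + ((Finset.univ.filter (fun j : Fin n => i ≤ (j : ℕ))).card : ℝ)
            * (l * ((5 / 3) * (‖w 0 - zs‖ + α * T))) := by
      rw [Finset.sum_add_distrib, Finset.sum_const, nsmul_eq_mul]
    have h5 : ((Finset.univ.filter (fun j : Fin n => i ≤ (j : ℕ))).card : ℝ)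
          * (l * ((5 / 3) * (‖w 0 - zs‖ + α * T)))
        ≤ ((n : ℝ) - i) * (l * ((5 / 3) * (‖w 0 - zs‖ + α * T))) :=
      mul_le_mul_of_nonneg_right (hcard i hi) hlD0
    rw [h1]
    apply mul_le_mul_of_nonneg_left _ hα0.le
    calc ‖∑ j ∈ Finset.univ.filter (fun j : Fin n => i ≤ (j : ℕ)), gv j‖
        ≤ ∑ j ∈ Finset.univ.filter (fun j : Fin n => i ≤ (j : ℕ)), ‖gv j‖ := h2
      _ ≤ _ := le_trans h3 (by rw [h4]; linarith only [h5])
  -- the error vector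
  set S : E := ∑ j : Fin n, gv j with hS_def
  set Wn : E := ∑ j : Fin n, ω (τ j) (w n) with hWn_def
  have hUex : ∑ j : Fin n, ∑ k ∈ Finset.univ.filter
      (fun k : Fin n => (j : ℕ) + 1 ≤ (k : ℕ)), G k = U := by
    rw [hU_def]
    exact sum_exchange' n G
  have hsum2 : ∑ j : Fin n, ((n : ℝ) - ((j : ℕ) + 1)) ≤ (n : ℝ) ^ 2 / 2 := by
    have h1 : ∑ j : Fin n, ((n : ℝ) - ((j : ℕ) + 1))
        = ∑ k ∈ Finset.range n, ((n : ℝ) - ((k : ℝ) + 1)) := by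
      rw [Fin.sum_univ_eq_sum_range (fun k => (n : ℝ) - ((k : ℝ) + 1))]
    rw [h1, Finset.sum_sub_distrib, Finset.sum_const, Finset.card_range, nsmul_eq_mul]
    have h2 : ∑ k ∈ Finset.range n, ((k : ℝ) + 1)
        = (∑ k ∈ Finset.range n, (k : ℝ)) + n := by
      rw [Finset.sum_add_distrib, Finset.sum_const, Finset.card_range, nsmul_eq_mul, mul_one]
    rw [h2, sum_range_cast]
    nlinarith [hn1]
  have he : ‖S - Wn‖ ≤ α * l * U
      + α * l ^ 2 * ((n : ℝ) ^ 2 / 2) * ((5 / 3) * (‖w 0 - zs‖ + α * T)) := by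
    have h0 : S - Wn = ∑ j : Fin n, (gv j - ω (τ j) (w n)) := by
      rw [hS_def, hWn_def, Finset.sum_sub_distrib]
    have h1 : ‖S - Wn‖ ≤ ∑ j : Fin n, ‖gv j - ω (τ j) (w n)‖ := by
      rw [h0]; exact norm_sum_le _ _
    have h2 : ∀ j : Fin n, ‖gv j - ω (τ j) (w n)‖ ≤
        l * (α * ((∑ k ∈ Finset.univ.filter (fun k : Fin n => (j : ℕ) + 1 ≤ (k : ℕ)), G k)
          + ((n : ℝ) - ((j : ℕ) + 1)) * (l * ((5 / 3) * (‖w 0 - zs‖ + α * T))))) := by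
      intro j
      have hlipj : ‖gv j - ω (τ j) (w n)‖ ≤ l * ‖w ((j : ℕ) + 1) - w n‖ := hlip (τ j) _ _
      have hdj := hdelta ((j : ℕ) + 1) j.isLt
      push_cast at hdj
      calc ‖gv j - ω (τ j) (w n)‖ ≤ l * ‖w ((j : ℕ) + 1) - w n‖ := hlipj
        _ ≤ _ := mul_le_mul_of_nonneg_left hdj hl0.le
    have h3 : ∑ j : Fin n, ‖gv j - ω (τ j) (w n)‖ ≤
        ∑ j : Fin n, l * (α * ((∑ k ∈ Finset.univ.filter
            (fun k : Fin n => (j : ℕ) + 1 ≤ (k : ℕ)), G k)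
          + ((n : ℝ) - ((j : ℕ) + 1)) * (l * ((5 / 3) * (‖w 0 - zs‖ + α * T))))) :=
      Finset.sum_le_sum (fun j _ => h2 j)
    have h4 : ∑ j : Fin n, l * (α * ((∑ k ∈ Finset.univ.filter
            (fun k : Fin n => (j : ℕ) + 1 ≤ (k : ℕ)), G k)
          + ((n : ℝ) - ((j : ℕ) + 1)) * (l * ((5 / 3) * (‖w 0 - zs‖ + α * T)))))
        = l * α * U + (l * α * (l * ((5 / 3) * (‖w 0 - zs‖ + α * T))))
            * ∑ j : Fin n, ((n : ℝ) - ((j : ℕ) + 1)) := by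
      calc ∑ j : Fin n, l * (α * ((∑ k ∈ Finset.univ.filter
              (fun k : Fin n => (j : ℕ) + 1 ≤ (k : ℕ)), G k)
            + ((n : ℝ) - ((j : ℕ) + 1)) * (l * ((5 / 3) * (‖w 0 - zs‖ + α * T)))))
          = ∑ j : Fin n, ((l * α) * (∑ k ∈ Finset.univ.filter
              (fun k : Fin n => (j : ℕ) + 1 ≤ (k : ℕ)), G k)
            + (l * α * (l * ((5 / 3) * (‖w 0 - zs‖ + α * T))))
              * ((n : ℝ) - ((j : ℕ) + 1))) := by
            apply Finset.sum_congr rfl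
            intro j _
            ring
        _ = (∑ j : Fin n, (l * α) * (∑ k ∈ Finset.univ.filter
              (fun k : Fin n => (j : ℕ) + 1 ≤ (k : ℕ)), G k))
            + ∑ j : Fin n, (l * α * (l * ((5 / 3) * (‖w 0 - zs‖ + α * T))))
              * ((n : ℝ) - ((j : ℕ) + 1)) := Finset.sum_add_distrib
        _ = (l * α) * (∑ j : Fin n, ∑ k ∈ Finset.univ.filter
              (fun k : Fin n => (j : ℕ) + 1 ≤ (k : ℕ)), G k)
            + (l * α * (l * ((5 / 3) * (‖w 0 - zs‖ + α * T))))
              * ∑ j : Fin n, ((n : ℝ) - ((j : ℕ) + 1)) := by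
            rw [← Finset.mul_sum, ← Finset.mul_sum]
        _ = l * α * U + (l * α * (l * ((5 / 3) * (‖w 0 - zs‖ + α * T))))
              * ∑ j : Fin n, ((n : ℝ) - ((j : ℕ) + 1)) := by rw [hUex]
    have h5 : (l * α * (l * ((5 / 3) * (‖w 0 - zs‖ + α * T))))
            * ∑ j : Fin n, ((n : ℝ) - ((j : ℕ) + 1))
        ≤ (l * α * (l * ((5 / 3) * (‖w 0 - zs‖ + α * T)))) * ((n : ℝ) ^ 2 / 2) := by
      apply mul_le_mul_of_nonneg_left hsum2 (by positivity)
    calc ‖S - Wn‖ ≤ _ := le_trans h1 h3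
      _ = _ := h4
      _ ≤ α * l * U + α * l ^ 2 * ((n : ℝ) ^ 2 / 2) * ((5 / 3) * (‖w 0 - zs‖ + α * T)) := by
          have e1 : l * α * U = α * l * U := by ring
          have e2 : (l * α * (l * ((5 / 3) * (‖w 0 - zs‖ + α * T)))) * ((n : ℝ) ^ 2 / 2)
              = α * l ^ 2 * ((n : ℝ) ^ 2 / 2) * ((5 / 3) * (‖w 0 - zs‖ + α * T)) := by ring
          linarith only [h5, e1.le, e1.ge, e2.le, e2.ge]
  -- exact identity for the epoch
  have hF0 : Finset.univ.filter (fun j : Fin n => 0 ≤ (j : ℕ)) = Finset.univ := by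
    ext j; simp
  have hS0 : w 0 = w n + α • S := by
    have := htele' 0 (Nat.zero_le n)
    rwa [hF0] at this
  have hw0 : w 0 - zs = (w n - zs) + α • S := by rw [hS0]; abel
  have hexpand : ‖w 0 - zs‖ ^ 2 = ‖w n - zs‖ ^ 2
      + 2 * (α * ⟪w n - zs, S⟫) + α ^ 2 * ‖S‖ ^ 2 := by
    rw [hw0, norm_add_sq_real, real_inner_smul_right, norm_smul, Real.norm_eq_abs,
      mul_pow, sq_abs]
  have hWnν : Wn = (n : ℝ) • ν (w n) := by
    have hperm : ∑ j : Fin n, ω (τ j) (w n) = ∑ i : Fin n, ω i (w n) :=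
      Equiv.sum_comp τ (fun i => ω i (w n))
    rw [hWn_def, hperm, hν (w n), smul_smul, mul_inv_cancel₀ hn0.ne', one_smul]
  have hmono' : ⟪w n - zs, ν (w n)⟫ ≥ μ * ‖w n - zs‖ ^ 2 := by
    have h := hmono (w n) zs
    rw [hzs, sub_zero] at h
    rwa [real_inner_comm]
  have hinner : ⟪w n - zs, S⟫ ≥ (n : ℝ) * (μ * ‖w n - zs‖ ^ 2)
      - ‖S - Wn‖ * ‖w n - zs‖ := by
    have hdec : ⟪w n - zs, S⟫ = ⟪w n - zs, Wn⟫ + ⟪w n - zs, S - Wn⟫ := by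
      rw [← inner_add_right]
      congr 1
      abel
    have h1 : ⟪w n - zs, Wn⟫ = (n : ℝ) * ⟪w n - zs, ν (w n)⟫ := by
      rw [hWnν, real_inner_smul_right]
    have h2 : (n : ℝ) * (μ * ‖w n - zs‖ ^ 2) ≤ (n : ℝ) * ⟪w n - zs, ν (w n)⟫ :=
      mul_le_mul_of_nonneg_left hmono' hn0.le
    have h3 : ⟪w n - zs, S - Wn⟫ ≥ -(‖S - Wn‖ * ‖w n - zs‖) := by
      have h4 := abs_real_inner_le_norm (w n - zs) (S - Wn)
      have h5 := neg_abs_le (⟪w n - zs, S - Wn⟫ : ℝ)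
      have h6 : ‖w n - zs‖ * ‖S - Wn‖ = ‖S - Wn‖ * ‖w n - zs‖ := mul_comm _ _
      linarith only [h4, h5, h6.le, h6.ge]
    rw [hdec, h1]
    linarith only [h2, h3]
  have hmain : (1 + 2 * ((n : ℝ) * α * μ)) * ‖w n - zs‖ ^ 2
      ≤ ‖w 0 - zs‖ ^ 2 + 2 * α * (‖S - Wn‖ * ‖w n - zs‖) := by
    have hsc : 2 * α * ((n : ℝ) * (μ * ‖w n - zs‖ ^ 2) - ‖S - Wn‖ * ‖w n - zs‖)
        ≤ 2 * α * ⟪w n - zs, S⟫ :=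
      mul_le_mul_of_nonneg_left hinner (by positivity)
    have hSsq : 0 ≤ α ^ 2 * ‖S‖ ^ 2 := by positivity
    nlinarith [hexpand, hsc, hSsq]
  -- variance facts
  have hσ0 : 0 ≤ σ2 := by
    rw [hσ2]
    have : 0 ≤ ∑ i : Fin n, ‖ω i zs‖ ^ 2 := Finset.sum_nonneg fun i _ => sq_nonneg _
    positivity
  have hGsq : ∑ j : Fin n, (G j) ^ 2 = (n : ℝ) * σ2 := by
    have hperm : ∑ j : Fin n, ‖ω (τ j) zs‖ ^ 2 = ∑ i : Fin n, ‖ω i zs‖ ^ 2 :=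
      Equiv.sum_comp τ (fun i => ‖ω i zs‖ ^ 2)
    rw [hG_def]
    simp only []
    rw [hperm, hσ2]
    field_simp
  have hT2 : T ^ 2 ≤ (n : ℝ) * ((n : ℝ) * σ2) := by
    have hcs := Finset.sum_mul_sq_le_sq_mul_sq Finset.univ (fun _ : Fin n => (1 : ℝ)) G
    simp only [one_pow, one_mul, Finset.sum_const, Finset.card_univ, Fintype.card_fin,
      nsmul_eq_mul, mul_one] at hcs
    rw [hT_def, ← hGsq]
    calc (∑ j : Fin n, G j) ^ 2 ≤ (n : ℝ) * ∑ j : Fin n, (G j) ^ 2 := hcs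
      _ = (n : ℝ) * ∑ j : Fin n, (G j) ^ 2 := rfl
  have hU2 : U ^ 2 ≤ ((n : ℝ) ^ 3 / 3) * ((n : ℝ) * σ2) := by
    have hcs := Finset.sum_mul_sq_le_sq_mul_sq Finset.univ
      (fun k : Fin n => ((k : ℕ) : ℝ)) G
    have hk2 : ∑ k : Fin n, ((k : ℕ) : ℝ) ^ 2 ≤ (n : ℝ) ^ 3 / 3 := by
      rw [Fin.sum_univ_eq_sum_range (fun k => (k : ℝ) ^ 2)]
      exact sum_range_sq_le n
    have hg2 : 0 ≤ ∑ j : Fin n, (G j) ^ 2 := Finset.sum_nonneg fun j _ => sq_nonneg _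
    rw [hU_def]
    calc (∑ k : Fin n, ((k : ℕ) : ℝ) * G k) ^ 2
        ≤ (∑ k : Fin n, ((k : ℕ) : ℝ) ^ 2) * ∑ j : Fin n, (G j) ^ 2 := hcs
      _ ≤ ((n : ℝ) ^ 3 / 3) * ∑ j : Fin n, (G j) ^ 2 :=
          mul_le_mul_of_nonneg_right hk2 hg2
      _ = ((n : ℝ) ^ 3 / 3) * ((n : ℝ) * σ2) := by rw [hGsq]
  exact endgame α l μ (n : ℝ) (‖w n - zs‖) (‖w 0 - zs‖) T U σ2 (‖S - Wn‖)
    hα0 hμ hμl hn1 (norm_nonneg _) (norm_nonneg _) hT0 hU0 hσ0 (norm_nonneg _)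
    hα5 hmain he hT2 hU2

/-- Proximal point method with Adversarial Shuffling (in particular the incremental
proximal point method): for EVERY sequence of permutations and every trajectory
satisfying the PPM-without-replacement recurrences (`z k i = zᵏ⁺¹ᵢ`), the output after
`K` epochs satisfies
`‖z^{K+1}₀ − z*‖² ≤ 2e^{−nαμK}‖z₀ − z*‖² + 3l²σ*²α³n³K/μ`. -/
theorem stmt_14
    {E : Type*} [NormedAddCommGroup E] [InnerProductSpace ℝ E] [FiniteDimensional ℝ E]
    (n : ℕ) (hn : 1 ≤ n) (ω : Fin n → E → E) (l μ : ℝ) (hμ : 0 < μ) (hμl : μ ≤ l)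
    (hlip : ∀ (i : Fin n) (z₁ z₂ : E), ‖ω i z₁ - ω i z₂‖ ≤ l * ‖z₁ - z₂‖)
    (ν : E → E) (hν : ∀ z, ν z = (n : ℝ)⁻¹ • ∑ i, ω i z)
    (hmono : ∀ z₁ z₂, ⟪ν z₁ - ν z₂, z₁ - z₂⟫ ≥ μ * ‖z₁ - z₂‖ ^ 2)
    (zs : E) (hzs : ν zs = 0)
    (σ2 : ℝ) (hσ2 : σ2 = (n : ℝ)⁻¹ * ∑ i, ‖ω i zs‖ ^ 2)
    (z0 : E) (K : ℕ) (hK : 1 ≤ K) (α : ℝ) (hα0 : 0 < α) (hα : α ≤ μ / (5 * n * l ^ 2)) :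
    ∀ (τs : ℕ → Equiv.Perm (Fin n)) (z : ℕ → ℕ → E),
      z 0 0 = z0 →
      (∀ k, z (k + 1) 0 = z k n) →
      (∀ k i (hi : i < n), z k (i + 1) = z k i - α • ω ((τs k) ⟨i, hi⟩) (z k (i + 1))) →
      ‖z K 0 - zs‖ ^ 2
        ≤ 2 * Real.exp (-((n : ℝ) * α * μ * K)) * ‖z0 - zs‖ ^ 2 +
            3 * l ^ 2 * σ2 * α ^ 3 * (n : ℝ) ^ 3 * K / μ := by

  intro τs z hz0 hznext hzrec
  have hl0 : 0 < l := lt_of_lt_of_le hμ hμl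
  have hn0 : (0 : ℝ) < n := by exact_mod_cast Nat.lt_of_lt_of_le Nat.zero_lt_one hn
  have hα5 : α * ((n : ℝ) * l ^ 2) * 5 ≤ μ := by
    have hden : (0 : ℝ) < 5 * n * l ^ 2 := by positivity
    have h1 : α * (5 * n * l ^ 2) ≤ μ := (le_div_iff₀ hden).1 hα
    nlinarith [h1]
  have hσ0 : 0 ≤ σ2 := by
    rw [hσ2]
    have : 0 ≤ ∑ i : Fin n, ‖ω i zs‖ ^ 2 := Finset.sum_nonneg fun i _ => sq_nonneg _
    positivity
  set C : ℝ := 3 * l ^ 2 * σ2 * α ^ 3 * (n : ℝ) ^ 3 / μ with hC_def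
  have hC0 : 0 ≤ C := by rw [hC_def]; positivity
  have hepoch : ∀ k, ‖z (k + 1) 0 - zs‖ ^ 2
      ≤ Real.exp (-((n : ℝ) * α * μ)) * ‖z k 0 - zs‖ ^ 2 + C := by
    intro k
    rw [hznext k]
    have := epoch n hn ω l μ hμ hμl hlip ν hν hmono zs hzs σ2 hσ2 α hα0 hα5
      (τs k) (z k) (hzrec k)
    rw [hC_def]
    linarith only [this]
  have hiter : ∀ k : ℕ, ‖z k 0 - zs‖ ^ 2
      ≤ Real.exp (-((n : ℝ) * α * μ * k)) * ‖z0 - zs‖ ^ 2 + C * k := by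
    intro k
    induction k with
    | zero => simp [hz0]
    | succ m ih =>
      have h1 := hepoch m
      have hexple1 : Real.exp (-((n : ℝ) * α * μ)) ≤ 1 := by
        rw [show (1 : ℝ) = Real.exp 0 by rw [Real.exp_zero]]
        apply Real.exp_le_exp.2
        have : (0 : ℝ) ≤ (n : ℝ) * α * μ := by positivity
        linarith
      have h2 : Real.exp (-((n : ℝ) * α * μ)) * ‖z m 0 - zs‖ ^ 2
          ≤ Real.exp (-((n : ℝ) * α * μ)) * (Real.exp (-((n : ℝ) * α * μ * m)) * ‖z0 - zs‖ ^ 2 + C * m) :=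
        mul_le_mul_of_nonneg_left ih (Real.exp_pos _).le
      have h3 : Real.exp (-((n : ℝ) * α * μ)) * Real.exp (-((n : ℝ) * α * μ * m))
          = Real.exp (-((n : ℝ) * α * μ * (m + 1))) := by
        rw [← Real.exp_add]
        congr 1
        ring
      have h4 : Real.exp (-((n : ℝ) * α * μ)) * (C * m) ≤ C * m := by
        have hCm : 0 ≤ C * m := mul_nonneg hC0 m.cast_nonneg
        nlinarith [hexple1, hCm]
      have hcast : ((m + 1 : ℕ) : ℝ) = (m : ℝ) + 1 := by push_cast; ring
      calc ‖z (m + 1) 0 - zs‖ ^ 2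
          ≤ Real.exp (-((n : ℝ) * α * μ)) * ‖z m 0 - zs‖ ^ 2 + C := h1
        _ ≤ Real.exp (-((n : ℝ) * α * μ)) * (Real.exp (-((n : ℝ) * α * μ * m)) * ‖z0 - zs‖ ^ 2 + C * m) + C := by
            linarith only [h2]
        _ = Real.exp (-((n : ℝ) * α * μ)) * Real.exp (-((n : ℝ) * α * μ * m)) * ‖z0 - zs‖ ^ 2
            + Real.exp (-((n : ℝ) * α * μ)) * (C * m) + C := by ring
        _ ≤ Real.exp (-((n : ℝ) * α * μ * (m + 1))) * ‖z0 - zs‖ ^ 2 + (C * m + C) := by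
            rw [← h3]
            linarith only [h4]
        _ = Real.exp (-((n : ℝ) * α * μ * ((m + 1 : ℕ) : ℝ))) * ‖z0 - zs‖ ^ 2 + C * ((m + 1 : ℕ) : ℝ) := by
            rw [hcast]
            ring
  have hfinal := hiter K
  have hE0 : 0 ≤ Real.exp (-((n : ℝ) * α * μ * K)) * ‖z0 - zs‖ ^ 2 := by positivity
  have hCK : C * K = 3 * l ^ 2 * σ2 * α ^ 3 * (n : ℝ) ^ 3 * K / μ := by
    rw [hC_def]; ring
  linarith only [hfinal, hE0, hCK.le, hCK.ge]
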